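/- Let U be a set of games closed under followers, disjunctive sum, and conjugation, and let S ⊆ U be closed under followers. If for every G ∈ S and every Left end X ∈ U the misère outcome of G + Ḡ + X lies in L ∪ N (Left wins moving first), then G + Ḡ ≡ 0 (mod U) for every G ∈ S, i.e., o⁻(G + Ḡ + Y) = o⁻(Y) for all Y ∈ U. -/

import Mathlib

universe u

namespace SetTheory

/-- Pre-games, as formerly defined in Mathlib (`SetTheory.PGame`), now removed from Mathlib. -/
inductive PGame : Type (u + 1)
  | mk : ∀ α β : Type u, (α → PGame) → (β → PGame) → PGame

namespace PGame

def LeftMoves : PGame → Type u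
  | mk l _ _ _ => l

def RightMoves : PGame → Type u
  | mk _ r _ _ => r

def moveLeft : ∀ g : PGame, LeftMoves g → PGame
  | mk _l _ L _ => L

def moveRight : ∀ g : PGame, RightMoves g → PGame
  | mk _ _r _ R => R

inductive IsOption : PGame → PGame → Prop
  | moveLeft {x : PGame} (i : x.LeftMoves) : IsOption (x.moveLeft i) x
  | moveRight {x : PGame} (i : x.RightMoves) : IsOption (x.moveRight i) x

def Subsequent : PGame → PGame → Prop :=
  Relation.TransGen IsOption

def neg : PGame → PGame
  | ⟨l, r, L, R⟩ => ⟨r, l, fun i => neg (R i), fun i => neg (L i)⟩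

instance : Neg PGame :=
  ⟨neg⟩

noncomputable instance : Add PGame.{u} :=
  ⟨fun x y => by
    induction x generalizing y with | mk xl xr _ _ IHxl IHxr => ?_
    induction y with | mk yl yr yL yR IHyl IHyr => ?_
    have y := mk yl yr yL yR
    refine ⟨xl ⊕ yl, xr ⊕ yr, Sum.rec ?_ ?_, Sum.rec ?_ ?_⟩
    · exact fun i => IHxl i y
    · exact IHyl
    · exact fun i => IHxr i y
    · exact IHyr⟩

end PGame

end SetTheory

open SetTheory

namespace Misere

/-- Misère winning: `(wins G).1` means Left, moving first on `G`, wins under misère play;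
`(wins G).2` means Right, moving first, wins. The player unable to move wins. -/
def wins : PGame → Prop × Prop
  | ⟨α, β, L, R⟩ =>
    (IsEmpty α ∨ ∃ i, ¬ (wins (L i)).2,
     IsEmpty β ∨ ∃ j, ¬ (wins (R j)).1)

/-- Left wins moving first under misère play. -/
def LeftFirst (G : PGame) : Prop := (wins G).1

/-- Right wins moving first under misère play. -/
def RightFirst (G : PGame) : Prop := (wins G).2

/-- Normal-play winning: `(nwins G).1` means Left moving first wins (player unable to move loses). -/
def nwins : PGame → Prop × Prop
  | ⟨α, β, L, R⟩ =>
    (∃ i, ¬ (nwins (L i)).2,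
     ∃ j, ¬ (nwins (R j)).1)

/-- Outcome classes. -/
inductive Outcome : Type
  | L | R | N | P
  deriving DecidableEq

/-- The partial order on outcomes: L > P > R, L > N > R, with P and N incomparable. -/
instance : LE Outcome := ⟨fun a b => a = b ∨ a = .R ∨ b = .L⟩

open Classical in
/-- The misère outcome of a game. -/
noncomputable def misereOutcome (G : PGame) : Outcome :=
  if (wins G).1 then (if (wins G).2 then .N else .L)
  else (if (wins G).2 then .R else .P)

open Classical in
/-- The normal-play outcome of a game. -/
noncomputable def normalOutcome (G : PGame) : Outcome :=
  if (nwins G).1 then (if (nwins G).2 then .N else .L)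
  else (if (nwins G).2 then .R else .P)

/-- A game is dicot if every subposition has a Left option iff it has a Right option. -/
def Dicot : PGame → Prop
  | ⟨α, β, L, R⟩ => (IsEmpty α ↔ IsEmpty β) ∧ (∀ i, Dicot (L i)) ∧ (∀ j, Dicot (R j))

/-- A dead Left end: a Left end all of whose followers are Left ends. -/
def DeadLeftEnd : PGame → Prop
  | ⟨α, _β, _L, R⟩ => IsEmpty α ∧ ∀ j, DeadLeftEnd (R j)

/-- A dead Right end: a Right end all of whose followers are Right ends. -/
def DeadRightEnd : PGame → Prop
  | ⟨_α, β, L, _R⟩ => IsEmpty β ∧ ∀ i, DeadRightEnd (L i)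

/-- A follower of `G` is any position reachable from `G`, including `G` itself. -/
def Follower (H G : PGame) : Prop := H = G ∨ PGame.Subsequent H G

/-- An end: a position where some player has no move. -/
def IsEnd (G : PGame) : Prop := IsEmpty G.LeftMoves ∨ IsEmpty G.RightMoves

/-- A game is dead-ending if every one of its end followers is a dead end. -/
def DeadEnding (G : PGame) : Prop :=
  ∀ H, Follower H G → IsEnd H → (DeadLeftEnd H ∨ DeadRightEnd H)

end Misere

/-!
Fix `G ∈ S` and `Y ∈ U` and induct on `G`, then on `Y`. A winning first move for Left in `Y`
stays winning in `G + -G + Y`, and if `Y` is a Left end the hypothesis applies. If instead Left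
loses moving first in `Y`, Right answers a Left move in `Y` inside `Y`, and a Left move in `G + -G`
with its mirror image, reaching `G' + -G' + Y` for an option `G'` of `G`, which by induction has
the outcome of `Y`. Right's half is Left's half for `-G` and `-Y`, as
`-(G + -G + Y) = -G + -(-G) + -Y`; for a Right end `Y` it needs the hypothesis at the Left end
`-Y ∈ U` and the fact that `-G + G` is a relabelling of `G + -G`.
-/

namespace SetTheory.PGame

theorem isOption_induction {C : PGame → Prop} (x : PGame)
    (IH : ∀ y, (∀ z, IsOption z y → C z) → C y) : C x := by
  induction x with
  | mk l r L R ihL ihR =>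
  refine IH _ fun z hz => ?_
  cases hz with
  | moveLeft i => exact ihL i
  | moveRight j => exact ihR j

instance : InvolutiveNeg PGame where
  neg_neg x := by
    induction x with
    | mk xl xr xL xR ihL ihR => exact congrArg₂ (mk xl xr) (funext ihL) (funext ihR)

protected theorem neg_add (x y : PGame) : -(x + y) = -x + -y := by
  induction x generalizing y with
  | mk xl xr xL xR ihxl ihxr =>
  induction y with
  | mk yl yr yL yR ihyl ihyr =>
  show mk _ _ _ _ = mk _ _ _ _
  congr 1 <;> funext k <;> rcases k with i | j
  · exact ihxr i _
  · exact ihyr j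
  · exact ihxl i _
  · exact ihyl j

theorem leftMoves_neg (x : PGame) : (-x).LeftMoves = x.RightMoves := by cases x; rfl

theorem rightMoves_neg (x : PGame) : (-x).RightMoves = x.LeftMoves := by cases x; rfl

def toLeftMovesNeg {x : PGame} : x.RightMoves ≃ (-x).LeftMoves :=
  Equiv.cast (leftMoves_neg x).symm

def toRightMovesNeg {x : PGame} : x.LeftMoves ≃ (-x).RightMoves :=
  Equiv.cast (rightMoves_neg x).symm

theorem moveRight_neg {x : PGame} (i) : (-x).moveRight (toRightMovesNeg i) = -x.moveLeft i := by
  cases x; rfl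

theorem moveLeft_neg' {x : PGame} (i) :
    (-x).moveLeft i = -x.moveRight (toLeftMovesNeg.symm i) := by
  cases x; rfl

theorem moveRight_neg' {x : PGame} (j) :
    (-x).moveRight j = -x.moveLeft (toRightMovesNeg.symm j) := by
  cases x; rfl

theorem IsOption.of_neg {x y : PGame} (h : IsOption y (-x)) : IsOption (-y) x := by
  cases h with
  | moveLeft i => rw [moveLeft_neg', neg_neg]; exact .moveRight _
  | moveRight j => rw [moveRight_neg', neg_neg]; exact .moveLeft _

theorem leftMoves_add (x y : PGame) : (x + y).LeftMoves = (x.LeftMoves ⊕ y.LeftMoves) := by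
  cases x; cases y; rfl

theorem rightMoves_add (x y : PGame) : (x + y).RightMoves = (x.RightMoves ⊕ y.RightMoves) := by
  cases x; cases y; rfl

def toLeftMovesAdd {x y : PGame} : x.LeftMoves ⊕ y.LeftMoves ≃ (x + y).LeftMoves :=
  Equiv.cast (leftMoves_add x y).symm

def toRightMovesAdd {x y : PGame} : x.RightMoves ⊕ y.RightMoves ≃ (x + y).RightMoves :=
  Equiv.cast (rightMoves_add x y).symm

theorem add_moveLeft_inl {x : PGame} (y : PGame) (i) :
    (x + y).moveLeft (toLeftMovesAdd (Sum.inl i)) = x.moveLeft i + y := by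
  cases x; cases y; rfl

theorem add_moveRight_inl {x : PGame} (y : PGame) (j) :
    (x + y).moveRight (toRightMovesAdd (Sum.inl j)) = x.moveRight j + y := by
  cases x; cases y; rfl

theorem add_moveLeft_inr (x : PGame) {y : PGame} (i) :
    (x + y).moveLeft (toLeftMovesAdd (Sum.inr i)) = x + y.moveLeft i := by
  cases x; cases y; rfl

theorem add_moveRight_inr (x : PGame) {y : PGame} (j) :
    (x + y).moveRight (toRightMovesAdd (Sum.inr j)) = x + y.moveRight j := by
  cases x; cases y; rfl

@[elab_as_elim]
theorem leftMoves_add_cases {x y : PGame} {P : (x + y).LeftMoves → Prop} (k)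
    (inl : ∀ i, P (toLeftMovesAdd (Sum.inl i))) (inr : ∀ i, P (toLeftMovesAdd (Sum.inr i))) :
    P k := by
  rw [← toLeftMovesAdd.apply_symm_apply k]
  rcases toLeftMovesAdd.symm k with i | i
  exacts [inl i, inr i]

@[elab_as_elim]
theorem rightMoves_add_cases {x y : PGame} {P : (x + y).RightMoves → Prop} (k)
    (inl : ∀ j, P (toRightMovesAdd (Sum.inl j))) (inr : ∀ j, P (toRightMovesAdd (Sum.inr j))) :
    P k := by
  rw [← toRightMovesAdd.apply_symm_apply k]
  rcases toRightMovesAdd.symm k with i | i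
  exacts [inl i, inr i]

inductive Relabelling : PGame.{u} → PGame.{u} → Prop
  | mk : ∀ {x y : PGame} (L : x.LeftMoves ≃ y.LeftMoves) (R : x.RightMoves ≃ y.RightMoves),
      (∀ i, Relabelling (x.moveLeft i) (y.moveLeft (L i))) →
        (∀ j, Relabelling (x.moveRight j) (y.moveRight (R j))) → Relabelling x y

infixl:50 " ≡r " => Relabelling

theorem Relabelling.add_right {w x : PGame} (h : w ≡r x) (y : PGame) : w + y ≡r x + y := by
  induction h generalizing y with
  | mk L R hL hR ihL ihR =>
  induction y with
  | mk yl yr yL yR ihyL ihyR =>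
  refine ⟨toLeftMovesAdd.symm.trans ((Equiv.sumCongr L (Equiv.refl _)).trans toLeftMovesAdd),
    toRightMovesAdd.symm.trans ((Equiv.sumCongr R (Equiv.refl _)).trans toRightMovesAdd),
    fun k => ?_, fun k => ?_⟩
  · cases k using leftMoves_add_cases with
    | inl i => simpa [add_moveLeft_inl] using ihL i _
    | inr i =>
      simp only [Equiv.trans_apply, Equiv.symm_apply_apply, Equiv.sumCongr_apply, Sum.map_inr,
        Equiv.refl_apply, add_moveLeft_inr]
      exact ihyL i
  · cases k using rightMoves_add_cases with
    | inl j => simpa [add_moveRight_inl] using ihR j _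
    | inr j =>
      simp only [Equiv.trans_apply, Equiv.symm_apply_apply, Equiv.sumCongr_apply, Sum.map_inr,
        Equiv.refl_apply, add_moveRight_inr]
      exact ihyR j

theorem addCommRelabelling (x y : PGame) : x + y ≡r y + x := by
  induction x generalizing y with
  | mk xl xr xL xR ihxl ihxr =>
  induction y with
  | mk yl yr yL yR ihyl ihyr =>
  refine ⟨Equiv.sumComm _ _, Equiv.sumComm _ _, ?_, ?_⟩ <;> rintro (i | j)
  · exact ihxl i _
  · exact ihyl j
  · exact ihxr i _
  · exact ihyr j

end SetTheory.PGame

namespace Misere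

open PGame

theorem follower_of_isOption {G H : PGame} (h : IsOption H G) : Follower H G :=
  Or.inr (Relation.TransGen.single h)

theorem leftFirst_iff {G : PGame} :
    LeftFirst G ↔ IsEmpty G.LeftMoves ∨ ∃ i, ¬RightFirst (G.moveLeft i) := by
  cases G; rfl

theorem rightFirst_iff {G : PGame} :
    RightFirst G ↔ IsEmpty G.RightMoves ∨ ∃ j, ¬LeftFirst (G.moveRight j) := by
  cases G; rfl

theorem not_leftFirst_iff {G : PGame} :
    ¬LeftFirst G ↔ Nonempty G.LeftMoves ∧ ∀ i, RightFirst (G.moveLeft i) := by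
  simp only [leftFirst_iff, not_or, not_exists, not_not, not_isEmpty_iff]

theorem leftFirst_of_not_rightFirst_moveLeft {G : PGame} (i) (h : ¬RightFirst (G.moveLeft i)) :
    LeftFirst G :=
  leftFirst_iff.2 (Or.inr ⟨i, h⟩)

theorem rightFirst_of_not_leftFirst_moveRight {G : PGame} (j) (h : ¬LeftFirst (G.moveRight j)) :
    RightFirst G :=
  rightFirst_iff.2 (Or.inr ⟨j, h⟩)

theorem leftFirst_neg_and_rightFirst_neg (G : PGame) :
    (LeftFirst (-G) ↔ RightFirst G) ∧ (RightFirst (-G) ↔ LeftFirst G) := by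
  induction G with
  | mk l r L R ihL ihR =>
  rw [leftFirst_iff, rightFirst_iff, rightFirst_iff, leftFirst_iff]
  exact ⟨or_congr_right (exists_congr fun j => not_congr (ihR j).2),
    or_congr_right (exists_congr fun i => not_congr (ihL i).1)⟩

theorem leftFirst_neg (G : PGame) : LeftFirst (-G) ↔ RightFirst G :=
  (leftFirst_neg_and_rightFirst_neg G).1

theorem rightFirst_neg (G : PGame) : RightFirst (-G) ↔ LeftFirst G :=
  (leftFirst_neg_and_rightFirst_neg G).2

theorem _root_.SetTheory.PGame.Relabelling.leftFirst_iff_and_rightFirst_iff {G H : PGame}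
    (h : G ≡r H) : (LeftFirst G ↔ LeftFirst H) ∧ (RightFirst G ↔ RightFirst H) := by
  induction h with
  | mk L R _ _ ihL ihR =>
  rw [leftFirst_iff, leftFirst_iff, rightFirst_iff, rightFirst_iff]
  exact ⟨or_congr L.isEmpty_congr (L.exists_congr fun i => not_congr (ihL i).2),
    or_congr R.isEmpty_congr (R.exists_congr fun j => not_congr (ihR j).1)⟩

theorem misereOutcome_eq_iff {G H : PGame} : misereOutcome G = misereOutcome H ↔
    (LeftFirst G ↔ LeftFirst H) ∧ (RightFirst G ↔ RightFirst H) := by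
  unfold misereOutcome LeftFirst RightFirst
  by_cases hGL : (wins G).1 <;> by_cases hGR : (wins G).2 <;>
    by_cases hHL : (wins H).1 <;> by_cases hHR : (wins H).2 <;> simp [*]

theorem misereOutcome_eq_L_or_N_iff {G : PGame} :
    misereOutcome G = .L ∨ misereOutcome G = .N ↔ LeftFirst G := by
  unfold misereOutcome LeftFirst
  by_cases hL : (wins G).1 <;> by_cases hR : (wins G).2 <;> simp [*]

theorem misereOutcome_neg_eq_iff {G H : PGame} :
    misereOutcome (-G) = misereOutcome (-H) ↔ misereOutcome G = misereOutcome H := by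
  simp only [misereOutcome_eq_iff, leftFirst_neg, rightFirst_neg, and_comm]

/-- Right answers every Left move in `G + -G` with its mirror image in the other component. -/
theorem rightFirst_moveLeft_add_neg_add {G Y : PGame}
    (hG : ∀ H, IsOption H G → ¬LeftFirst (H + -H + Y)) (k : (G + -G).LeftMoves) :
    RightFirst ((G + -G).moveLeft k + Y) := by
  cases k using leftMoves_add_cases with
  | inl i =>
    rw [add_moveLeft_inl]
    refine rightFirst_of_not_leftFirst_moveRight
      (toRightMovesAdd (.inl (toRightMovesAdd (.inr (toRightMovesNeg i))))) ?_
    rw [add_moveRight_inl, add_moveRight_inr, moveRight_neg]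
    exact hG _ (.moveLeft i)
  | inr j =>
    rw [add_moveLeft_inr, moveLeft_neg']
    refine rightFirst_of_not_leftFirst_moveRight
      (toRightMovesAdd (.inl (toRightMovesAdd (.inl (toLeftMovesNeg.symm j))))) ?_
    rw [add_moveRight_inl, add_moveRight_inl]
    exact hG _ (.moveRight _)

theorem leftFirst_add_neg_add_iff {G Y : PGame}
    (hG : ∀ H, IsOption H G → misereOutcome (H + -H + Y) = misereOutcome Y)
    (hY : ∀ i, misereOutcome (G + -G + Y.moveLeft i) = misereOutcome (Y.moveLeft i))
    (hEnd : IsEmpty Y.LeftMoves → LeftFirst (G + -G + Y)) :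
    LeftFirst (G + -G + Y) ↔ LeftFirst Y := by
  refine ⟨fun hsum => ?_, fun hYL => ?_⟩
  · by_contra hYL
    obtain ⟨⟨i₀⟩, hYR⟩ := not_leftFirst_iff.1 hYL
    refine not_leftFirst_iff.2 ⟨?_, fun k => ?_⟩ hsum
    · rw [leftMoves_add]
      exact ⟨.inr i₀⟩
    · cases k using leftMoves_add_cases with
      | inl k =>
        rw [add_moveLeft_inl]
        exact rightFirst_moveLeft_add_neg_add
          (fun H hH => (misereOutcome_eq_iff.1 (hG H hH)).1.not.2 hYL) k
      | inr i =>
        rw [add_moveLeft_inr]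
        exact (misereOutcome_eq_iff.1 (hY i)).2.2 (hYR i)
  · by_cases hE : IsEmpty Y.LeftMoves
    · exact hEnd hE
    · obtain ⟨i, hi⟩ := (leftFirst_iff.1 hYL).resolve_left hE
      refine leftFirst_of_not_rightFirst_moveLeft (toLeftMovesAdd (.inr i)) ?_
      rw [add_moveLeft_inr]
      exact (misereOutcome_eq_iff.1 (hY i)).2.not.2 hi

theorem rightFirst_add_neg_add_iff {G Y : PGame}
    (hG : ∀ H, IsOption H G → misereOutcome (H + -H + Y) = misereOutcome Y)
    (hY : ∀ j, misereOutcome (G + -G + Y.moveRight j) = misereOutcome (Y.moveRight j))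
    (hEnd : IsEmpty Y.RightMoves → RightFirst (G + -G + Y)) :
    RightFirst (G + -G + Y) ↔ RightFirst Y := by
  have hneg : ∀ H Z, misereOutcome (-H + -(-H) + -Z) = misereOutcome (-Z) ↔
      misereOutcome (H + -H + Z) = misereOutcome Z := fun H Z => by
    rw [← PGame.neg_add, ← PGame.neg_add, misereOutcome_neg_eq_iff]
  rw [← leftFirst_neg, ← leftFirst_neg, PGame.neg_add, PGame.neg_add]
  refine leftFirst_add_neg_add_iff (fun H hH => ?_) (fun i => ?_) fun hE => ?_
  · rw [← neg_neg H, hneg]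
    exact hG _ hH.of_neg
  · rw [moveLeft_neg', hneg]
    exact hY _
  · rw [← PGame.neg_add, ← PGame.neg_add, leftFirst_neg]
    exact hEnd (by rwa [leftMoves_neg] at hE)

theorem rightFirst_add_neg_add_iff_leftFirst_add_neg_add_neg (G Y : PGame) :
    RightFirst (G + -G + Y) ↔ LeftFirst (G + -G + -Y) := by
  rw [← leftFirst_neg, PGame.neg_add, PGame.neg_add, neg_neg]
  exact ((addCommRelabelling (-G) G).add_right (-Y)).leftFirst_iff_and_rightFirst_iff.1

end Misere

open Misere in
theorem invertibility_criterion_general (U S : Set PGame)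
    (hUf : ∀ G ∈ U, ∀ H, Follower H G → H ∈ U)
    (hUc : ∀ G ∈ U, -G ∈ U)
    (hSf : ∀ G ∈ S, ∀ H, Follower H G → H ∈ S)
    (h : ∀ G ∈ S, ∀ X ∈ U, IsEmpty X.LeftMoves →
      (misereOutcome (G + -G + X) = Outcome.L ∨ misereOutcome (G + -G + X) = Outcome.N)) :
    ∀ G ∈ S, ∀ Y ∈ U, misereOutcome (G + -G + Y) = misereOutcome Y := by
  intro G
  induction G using PGame.isOption_induction with | IH G ihG => ?_
  intro hGS Y
  induction Y using PGame.isOption_induction with | IH Y ihY => ?_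
  intro hYU
  have hG : ∀ H, PGame.IsOption H G → misereOutcome (H + -H + Y) = misereOutcome Y :=
    fun H hH => ihG H hH (hSf G hGS H (follower_of_isOption hH)) Y hYU
  have hY : ∀ Z, PGame.IsOption Z Y → misereOutcome (G + -G + Z) = misereOutcome Z :=
    fun Z hZ => ihY Z hZ (hUf Y hYU Z (follower_of_isOption hZ))
  refine misereOutcome_eq_iff.2
    ⟨leftFirst_add_neg_add_iff hG (fun i => hY _ (.moveLeft i)) fun hE => ?_,
      rightFirst_add_neg_add_iff hG (fun j => hY _ (.moveRight j)) fun hE => ?_⟩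
  · exact misereOutcome_eq_L_or_N_iff.1 (h G hGS Y hYU hE)
  · rw [rightFirst_add_neg_add_iff_leftFirst_add_neg_add_neg]
    exact misereOutcome_eq_L_or_N_iff.1
      (h G hGS (-Y) (hUc Y hYU) (by rwa [PGame.leftMoves_neg]))

open Misere in
/-- Milley–Renault invertibility criterion. -/
theorem invertibility_criterion (U S : Set PGame)
    (hUf : ∀ G ∈ U, ∀ H, Follower H G → H ∈ U)
    (hUs : ∀ G ∈ U, ∀ H ∈ U, G + H ∈ U)
    (hUc : ∀ G ∈ U, -G ∈ U)
    (hSU : S ⊆ U)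
    (hSf : ∀ G ∈ S, ∀ H, Follower H G → H ∈ S)
    (h : ∀ G ∈ S, ∀ X ∈ U, IsEmpty X.LeftMoves →
      (misereOutcome (G + -G + X) = Outcome.L ∨ misereOutcome (G + -G + X) = Outcome.N)) :
    ∀ G ∈ S, ∀ Y ∈ U, misereOutcome (G + -G + Y) = misereOutcome Y :=
  invertibility_criterion_general U S hUf hUc hSf h
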